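/- Let A be an n-dimensional complex Leibniz algebra of nilindex n + 1, i.e. A^n ≠ 0 and A^{n+1} = 0. Then there exists a basis e₁, …, e_n of A such that [e_i, e₁] = e_{i+1} for 1 ≤ i ≤ n−1 and all other products of basis elements are zero (in particular [e_i, e_j] = 0 whenever j ≥ 2, and [e_n, e₁] = 0). -/

import Mathlib

/-- A complex Leibniz algebra structure on a vector space `V`: a bilinear bracket
satisfying the Leibniz identity `[x,[y,z]] = [[x,y],z] − [[x,z],y]`. -/
structure LeibnizAlg (V : Type*) [AddCommGroup V] [Module ℂ V] where
  br : V →ₗ[ℂ] V →ₗ[ℂ] V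
  leibniz : ∀ x y z : V, br x (br y z) = br (br x y) z - br (br x z) y

namespace LeibnizAlg

variable {V : Type*} [AddCommGroup V] [Module ℂ V]

/-- The span of all products `[u,v]` with `u ∈ S`, `v ∈ T`. -/
def prodSpan (A : LeibnizAlg V) (S T : Submodule ℂ V) : Submodule ℂ V :=
  Submodule.span ℂ {z : V | ∃ u ∈ S, ∃ v ∈ T, z = A.br u v}

/-- `A.lcs k` is the `(k+1)`-st term `A^{k+1}` of the descending central series:
`A¹ = A`, `A^{k+1} = [A^k, A]`. -/
def lcs (A : LeibnizAlg V) : ℕ → Submodule ℂ V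
  | 0 => ⊤
  | k + 1 => A.prodSpan (lcs A k) ⊤

end LeibnizAlg

/-!
The descending central series strictly decreases until it vanishes at `A^{n+1}`; squeezed
into dimension `n` this forces `dim A^k = n + 1 - k`, so `A²` has codimension one and any
`x ∉ A²` generates `A` modulo `A²`. Since `[A^k, A²] ⊆ A^{k+2}` by the Leibniz identity,
`A^k = ℂ xₖ + A^{k+1}` for the right powers `x₁ = x`, `x_{k+1} = [xₖ, x]`, so
`x₁, …, xₙ` is a basis. Finally `[y, x₂] = [y, [x, x]] = 0` is the Leibniz identity with two
equal arguments, and `[y, x_{k+1}] = [[y, xₖ], x] − [[y, x], xₖ] = 0` follows inductively.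
-/

open Module Submodule

theorem Submodule.finrank_add_sub_le_of_forall_succ_lt {K M : Type*} [DivisionRing K]
    [AddCommGroup M] [Module K M] [FiniteDimensional K M] {p : ℕ → Submodule K M} {n : ℕ}
    (hp : ∀ k < n, p (k + 1) < p k) {j k : ℕ} (hjk : j ≤ k) (hkn : k ≤ n) :
    finrank K (p k) + (k - j) ≤ finrank K (p j) := by
  induction k, hjk using Nat.le_induction with
  | base => simp
  | succ k hjk ih =>
    have := finrank_lt_finrank_of_lt (hp k (by omega))
    have := ih (by omega)
    omega

theorem Submodule.exists_span_singleton_sup_eq_top {K M : Type*} [DivisionRing K]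
    [AddCommGroup M] [Module K M] [FiniteDimensional K M] {p : Submodule K M}
    (hp : finrank K p + 1 = finrank K M) : ∃ x, K ∙ x ⊔ p = ⊤ := by
  have hp_ne_top : p ≠ ⊤ := by
    rintro rfl
    rw [finrank_top] at hp
    omega
  obtain ⟨x, -, hx⟩ := SetLike.exists_of_lt hp_ne_top.lt_top
  refine ⟨x, ?_⟩
  have hlt : p < K ∙ x ⊔ p :=
    lt_of_le_of_ne le_sup_right fun h => hx (h ▸ mem_sup_left (mem_span_singleton_self x))
  have := finrank_lt_finrank_of_lt hlt
  have := finrank_le (K ∙ x ⊔ p)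
  exact eq_top_of_finrank_eq (by omega)

namespace LeibnizAlg

variable {V : Type*} [AddCommGroup V] [Module ℂ V] (A : LeibnizAlg V)

lemma br_mem_prodSpan {S T : Submodule ℂ V} {u v : V} (hu : u ∈ S) (hv : v ∈ T) :
    A.br u v ∈ A.prodSpan S T :=
  subset_span ⟨u, hu, v, hv, rfl⟩

lemma prodSpan_le {S T U : Submodule ℂ V} (h : ∀ u ∈ S, ∀ v ∈ T, A.br u v ∈ U) :
    A.prodSpan S T ≤ U :=
  span_le.mpr fun _ ⟨u, hu, v, hv, hz⟩ => hz ▸ h u hu v hv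

lemma br_mem_lcs_succ {k : ℕ} {u : V} (hu : u ∈ A.lcs k) (v : V) : A.br u v ∈ A.lcs (k + 1) :=
  A.br_mem_prodSpan hu mem_top

lemma lcs_succ_le : ∀ k, A.lcs (k + 1) ≤ A.lcs k
  | 0 => le_top
  | k + 1 => A.prodSpan_le fun _ hu v _ => A.br_mem_lcs_succ (lcs_succ_le k hu) v

lemma lcs_eq_of_lcs_succ_eq {k : ℕ} (h : A.lcs (k + 1) = A.lcs k) {m : ℕ} (hm : k ≤ m) :
    A.lcs m = A.lcs k := by
  induction m, hm using Nat.le_induction with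
  | base => rfl
  | succ m hm ih =>
    change A.prodSpan (A.lcs m) ⊤ = _
    rw [ih]
    exact h

lemma lcs_succ_lt {n : ℕ} (h1 : A.lcs (n - 1) ≠ ⊥) (h2 : A.lcs n = ⊥) {k : ℕ} (hk : k < n) :
    A.lcs (k + 1) < A.lcs k := by
  refine (A.lcs_succ_le k).lt_of_ne fun h => h1 ?_
  rw [A.lcs_eq_of_lcs_succ_eq h (by omega : k ≤ n - 1), ← A.lcs_eq_of_lcs_succ_eq h hk.le, h2]

lemma finrank_lcs_one_add_one [FiniteDimensional ℂ V] {n : ℕ} (hn : finrank ℂ V = n)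
    (h1 : A.lcs (n - 1) ≠ ⊥) (h2 : A.lcs n = ⊥) :
    finrank ℂ (A.lcs 1) + 1 = finrank ℂ V := by
  have hn0 : 0 < n := Nat.pos_of_ne_zero (by rintro rfl; exact h1 h2)
  have hlow := finrank_add_sub_le_of_forall_succ_lt (fun _ => A.lcs_succ_lt h1 h2) (j := 1)
    hn0 le_rfl
  have hhigh : finrank ℂ (A.lcs 1) < finrank ℂ (⊤ : Submodule ℂ V) :=
    finrank_lt_finrank_of_lt (A.lcs_succ_lt h1 h2 hn0)
  rw [h2, finrank_bot] at hlow
  rw [finrank_top] at hhigh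
  omega

lemma br_mem_lcs_add_two {k : ℕ} {u v : V} (hu : u ∈ A.lcs k) (hv : v ∈ A.lcs 1) :
    A.br u v ∈ A.lcs (k + 2) := by
  suffices A.lcs 1 ≤ (A.lcs (k + 2)).comap (A.br u) from this hv
  refine A.prodSpan_le fun y _ z _ => ?_
  rw [mem_comap, A.leibniz]
  exact sub_mem (A.br_mem_lcs_succ (A.br_mem_lcs_succ hu y) z)
    (A.br_mem_lcs_succ (A.br_mem_lcs_succ hu z) y)

def rightPow (x : V) : ℕ → V
  | 0 => x
  | k + 1 => A.br (rightPow x k) x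

lemma rightPow_mem_lcs (x : V) : ∀ k, A.rightPow x k ∈ A.lcs k
  | 0 => mem_top
  | k + 1 => A.br_mem_lcs_succ (rightPow_mem_lcs x k) x

lemma br_rightPow_succ (x y : V) : ∀ j, A.br y (A.rightPow x (j + 1)) = 0
  | 0 => by
    change A.br y (A.br x x) = 0
    rw [A.leibniz, sub_self]
  | j + 1 => by
    change A.br y (A.br (A.rightPow x (j + 1)) x) = 0
    rw [A.leibniz, br_rightPow_succ x y j, br_rightPow_succ x (A.br y x) j, map_zero,
      LinearMap.zero_apply, sub_zero]

lemma br_rightPow (x : V) (i j : ℕ) :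
    A.br (A.rightPow x i) (A.rightPow x j) = if j = 0 then A.rightPow x (i + 1) else 0 := by
  cases j with
  | zero => rfl
  | succ j => exact A.br_rightPow_succ x _ j

lemma lcs_eq_span_rightPow_sup {x : V} (hx : ℂ ∙ x ⊔ A.lcs 1 = ⊤) :
    ∀ k, A.lcs k = ℂ ∙ A.rightPow x k ⊔ A.lcs (k + 1)
  | 0 => hx.symm
  | k + 1 => by
    refine le_antisymm (A.prodSpan_le fun u hu v _ => ?_)
      (sup_le ((span_singleton_le_iff_mem _ _).mpr (A.rightPow_mem_lcs x _)) (A.lcs_succ_le _))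
    rw [lcs_eq_span_rightPow_sup hx k] at hu
    obtain ⟨_, ha, u', hu', rfl⟩ := mem_sup.mp hu
    obtain ⟨c, rfl⟩ := mem_span_singleton.mp ha
    obtain ⟨_, hb, v', hv', rfl⟩ := mem_sup.mp (hx.ge (mem_top : v ∈ ⊤))
    obtain ⟨d, rfl⟩ := mem_span_singleton.mp hb
    have hmain : A.br (A.rightPow x k) x = A.rightPow x (k + 1) := rfl
    simp only [map_add, map_smul, LinearMap.add_apply, LinearMap.smul_apply, hmain]
    refine add_mem (smul_mem _ _ (add_mem (smul_mem _ _ (mem_sup_left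
      (mem_span_singleton_self _))) ?_)) (add_mem (smul_mem _ _ ?_) ?_) <;> apply mem_sup_right
    · exact A.br_mem_lcs_succ hu' x
    · exact A.br_mem_lcs_add_two (A.rightPow_mem_lcs x k) hv'
    · exact A.br_mem_lcs_succ hu' v'

lemma top_le_span_rightPow_sup {x : V} (hx : ℂ ∙ x ⊔ A.lcs 1 = ⊤) :
    ∀ k, ⊤ ≤ span ℂ (A.rightPow x '' Set.Iio k) ⊔ A.lcs k
  | 0 => le_sup_right
  | k + 1 => by
    rw [Set.Iio_add_one_eq_Iic, ← Set.Iio_insert, Set.image_insert_eq, span_insert,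
      sup_comm (ℂ ∙ _), sup_assoc, ← A.lcs_eq_span_rightPow_sup hx]
    exact top_le_span_rightPow_sup hx k

end LeibnizAlg

open LeibnizAlg

/-- An `n`-dimensional complex Leibniz algebra of nilindex `n + 1`
(`A^n ≠ 0`, `A^{n+1} = 0`) has a basis `e₁,…,e_n` with `[e_i,e₁] = e_{i+1}`
(`1 ≤ i ≤ n−1`) and all other products of basis vectors zero.
(Here `A.lcs k = A^{k+1}`; the basis is 0-indexed.) -/
theorem statement7 {V : Type*} [AddCommGroup V] [Module ℂ V] [FiniteDimensional ℂ V]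
    (A : LeibnizAlg V) (n : ℕ)
    (hn : Module.finrank ℂ V = n)
    (h1 : A.lcs (n - 1) ≠ ⊥) (h2 : A.lcs n = ⊥) :
    ∃ e : Module.Basis (Fin n) ℂ V, ∀ i j : Fin n,
      A.br (e i) (e j) =
        if h : j.val = 0 ∧ i.val + 1 < n then e ⟨i.val + 1, h.2⟩ else 0 := by
  obtain ⟨x, hgen⟩ := exists_span_singleton_sup_eq_top (A.finrank_lcs_one_add_one hn h1 h2)
  have hspan : ⊤ ≤ span ℂ (Set.range fun i : Fin n => A.rightPow x i) := by
    rw [Set.range_comp' (A.rightPow x) Fin.val, Fin.range_val]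
    simpa only [h2, sup_bot_eq] using A.top_le_span_rightPow_sup hgen n
  have hxn : A.rightPow x n = 0 := by simpa [h2] using A.rightPow_mem_lcs x n
  refine ⟨basisOfTopLeSpanOfCardEqFinrank _ hspan (by simp [hn]), fun i j => ?_⟩
  simp only [coe_basisOfTopLeSpanOfCardEqFinrank, A.br_rightPow]
  split_ifs with hj hij hij
  · rfl
  · rw [show i.val + 1 = n by omega, hxn]
  · exact absurd hij.1 hj
  · rfl
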